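/- Let G be a compact Abelian group, μ ∈ M₀₀(G) and ν ∈ M(G) a measure with natural spectrum. Then μ + ν has natural spectrum. Consequently M₀₀(G) ⊆ S(G). -/

import Mathlib

/-!
If `λ ∈ σ(μ + ν)` were not in the closure of `(μ + ν)^(Ĝ)`, some ball `B(λ, 2ε)` would miss that
image. Every character outside `Ĝ` kills `μ`, so the rest of `σ(μ + ν)` lies in
`σ(ν) = cl ν̂(Ĝ)`. Since `μ̂` vanishes at infinity on the discrete `Ĝ`, `|μ̂| < ε` off a finite set
`F`, and there `ν̂` stays out of `B(λ, ε)`; hence `σ(μ + ν) ∩ B(λ, ε) ⊆ ν̂(F)` is finite, `λ` is an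
isolated point of `σ(μ + ν)`, and Zafran's lemma puts `λ` in `(μ + ν)^(Ĝ)`, a contradiction.
-/

open WeakDual Filter

/-- `μ ∈ M(G)` (modelled as a commutative complex Banach algebra `A` with the dual group `Ĝ`
given as a subset `Ghat` of the Gelfand space) has natural spectrum if `σ(μ)` equals the
closure of the range of its Fourier–Stieltjes transform. -/
def HasNaturalSpectrum {A : Type*} [NormedCommRing A] [NormedAlgebra ℂ A]
    (Ghat : Set (characterSpace ℂ A)) (μ : A) : Prop :=
  spectrum ℂ μ = closure ((fun φ : characterSpace ℂ A => φ μ) '' Ghat)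

open Metric Set Topology

theorem exists_isOpen_inter_eq_singleton_of_finite {X : Type*} [TopologicalSpace X] [T1Space X]
    {S U : Set X} {x : X} (hU : IsOpen U) (hxU : x ∈ U) (hxS : x ∈ S) (hfin : (U ∩ S).Finite) :
    ∃ V : Set X, IsOpen V ∧ V ∩ S = {x} := by
  refine ⟨U \ ((U ∩ S) \ {x}), hU.sdiff (hfin.subset sdiff_subset).isClosed, ?_⟩
  ext y
  constructor
  · rintro ⟨⟨hyU, hy⟩, hyS⟩
    by_contra hyx
    exact hy ⟨⟨hyU, hyS⟩, hyx⟩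
  · rintro rfl
    exact ⟨⟨hxU, fun h => h.2 rfl⟩, hxS⟩

theorem finite_setOf_le_norm_of_tendsto_cofinite {X E : Type*} [SeminormedAddCommGroup E]
    {f : X → E} (hf : Tendsto f cofinite (𝓝 0)) {ε : ℝ} (hε : 0 < ε) :
    {x | ε ≤ ‖f x‖}.Finite := by
  simpa [eventually_cofinite, dist_zero_right] using Metric.tendsto_nhds.mp hf ε hε

theorem subset_closure_range_add {X E : Type*} [NormedAddCommGroup E] {f g : X → E} {S : Set E}
    (hf : Tendsto f cofinite (𝓝 0))
    (hS : S ⊆ range (fun x => f x + g x) ∪ closure (range g))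
    (hiso : ∀ z ∈ S, (∃ U : Set E, IsOpen U ∧ U ∩ S = {z}) → z ∈ range (fun x => f x + g x)) :
    S ⊆ closure (range (fun x => f x + g x)) := by
  intro z hz
  by_contra hcl
  obtain ⟨δ, hδ, hsep⟩ : ∃ δ > 0, ∀ w ∈ range (fun x => f x + g x), δ ≤ dist z w := by
    rw [Metric.mem_closure_iff] at hcl
    push Not at hcl
    exact hcl
  set ε := δ / 2 with hεδ
  have hε : 0 < ε := by positivity
  set F := {x | ε ≤ ‖f x‖}
  have hFfin : F.Finite := finite_setOf_le_norm_of_tendsto_cofinite hf hε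
  have hnear : range g ∩ ball z ε ⊆ g '' F := by
    rintro _ ⟨⟨x, rfl⟩, hx⟩
    refine ⟨x, (le_of_not_gt fun hfx => ?_ : ε ≤ ‖f x‖), rfl⟩
    have := (hsep (f x + g x) ⟨x, rfl⟩).trans (dist_triangle_right z (f x + g x) (g x))
    rw [dist_add_self_left] at this
    rw [mem_ball'] at hx
    linarith
  have hloc : ball z ε ∩ S ⊆ g '' F := by
    rintro w ⟨hwz, hwS⟩
    rcases hS hwS with hw | hw
    · have := hsep w hw
      rw [mem_ball'] at hwz
      linarith
    · rw [← (hFfin.image g).isClosed.closure_eq]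
      exact (isOpen_ball.inter_closure.trans (closure_mono (inter_comm _ (range g) ▸ hnear)))
        ⟨hwz, hw⟩
  have hz_range := hiso z hz (exists_isOpen_inter_eq_singleton_of_finite isOpen_ball
    (mem_ball_self hε) hz ((hFfin.image g).subset hloc))
  have := hsep z hz_range
  rw [dist_self] at this
  linarith

section Gelfand

variable {A : Type*} [NormedCommRing A] [NormedAlgebra ℂ A] [CompleteSpace A]

theorem closure_image_apply_subset_spectrum (s : Set (characterSpace ℂ A)) (a : A) :
    closure ((fun φ : characterSpace ℂ A => φ a) '' s) ⊆ spectrum ℂ a :=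
  closure_minimal (by rintro _ ⟨φ, -, rfl⟩; exact CharacterSpace.apply_mem_spectrum φ a)
    (spectrum.isClosed a)

theorem spectrum_add_subset_of_apply_eq_zero (s : Set (characterSpace ℂ A)) {a : A}
    (ha : ∀ φ : characterSpace ℂ A, φ ∉ s → φ a = 0) (b : A) :
    spectrum ℂ (a + b) ⊆ (fun φ : characterSpace ℂ A => φ (a + b)) '' s ∪ spectrum ℂ b := by
  intro z hz
  obtain ⟨φ, rfl⟩ := CharacterSpace.mem_spectrum_iff_exists.mp hz
  by_cases hφ : φ ∈ s
  · exact Or.inl ⟨φ, hφ, rfl⟩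
  · right
    rw [map_add, ha φ hφ, zero_add]
    exact CharacterSpace.apply_mem_spectrum φ b

end Gelfand

/-- `hiso` is Zafran's lemma (isolated points of spectra lie in the range of the
Fourier–Stieltjes transform) and `hM0` is the inclusion `M₀₀(G) ⊆ M₀(G)`. -/
theorem M00_subset_spectrallyReasonable
    {A : Type*} [NormedCommRing A] [NormedAlgebra ℂ A] [CompleteSpace A]
    (Ghat : Set (characterSpace ℂ A))
    (hdiscrete : DiscreteTopology Ghat)
    (hiso : ∀ (ξ : A) (lam : ℂ), lam ∈ spectrum ℂ ξ →
      (∃ U : Set ℂ, IsOpen U ∧ U ∩ spectrum ℂ ξ = {lam}) → ∃ φ ∈ Ghat, φ ξ = lam)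
    (hM0 : ∀ μ : A, (∀ φ : characterSpace ℂ A, φ ∉ Ghat → φ μ = 0) →
      Tendsto (fun γ : Ghat => (γ : characterSpace ℂ A) μ) (cocompact Ghat) (nhds 0)) :
    {μ : A | ∀ φ : characterSpace ℂ A, φ ∉ Ghat → φ μ = 0} ⊆
      {μ : A | ∀ ν : A, HasNaturalSpectrum Ghat ν → HasNaturalSpectrum Ghat (μ + ν)} := by
  intro μ hμ ν hν
  have himage : ∀ a : A, (fun φ : characterSpace ℂ A => φ a) '' Ghat =
      range fun γ : Ghat => (γ : characterSpace ℂ A) a := fun a => image_eq_range _ _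
  have hdecay := cocompact_eq_cofinite Ghat ▸ hM0 μ hμ
  unfold HasNaturalSpectrum at hν ⊢
  rw [himage] at hν
  refine Subset.antisymm ?_ (closure_image_apply_subset_spectrum Ghat (μ + ν))
  rw [himage]
  simp only [map_add]
  refine subset_closure_range_add hdecay ?_ fun z hz hz_iso => ?_
  · have h := spectrum_add_subset_of_apply_eq_zero Ghat hμ ν
    rw [himage, hν] at h
    simpa only [map_add] using h
  · obtain ⟨φ, hφ, rfl⟩ := hiso (μ + ν) z hz hz_iso
    exact ⟨⟨φ, hφ⟩, (map_add φ μ ν).symm⟩
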